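/- The second-order noncommutative corrections D^{(2)} and H^{(2)} (explicit cubic polynomials in E, B, ε, β listed below) also respect the electric–magnetic duality: substituting (E,B) → (−B,E) and (ε,β) → (β,−ε) sends D^{(2)} → −H^{(2)} and H^{(2)} → D^{(2)}. -/
import Mathlib


open scoped BigOperators Matrix
set_option maxHeartbeats 1000000

noncomputable section

/-- Euclidean dot product on ℝ³. -/
def dot3 (v w : Fin 3 → ℝ) : ℝ := ∑ i, v i * w i

/-- Second-order NC correction to the electric displacement. -/
def D2 (E B ε β : Fin 3 → ℝ) : Fin 3 → ℝ :=
  ((dot3 ε E - dot3 β B) ^ 2 - dot3 ε ε * dot3 B B + (dot3 ε B) ^ 2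
      + dot3 ε β * dot3 E B) • E
  + (dot3 β E * (dot3 ε E - dot3 β B) - dot3 ε B * dot3 β B + dot3 β β * dot3 E B
      + (1/2) * dot3 ε β * (dot3 E E - dot3 B B)) • B
  + ((dot3 ε E - dot3 β B) * dot3 E E + dot3 β E * dot3 E B + dot3 β B * dot3 B B) • ε
  + ((dot3 ε E - dot3 β B) * dot3 E B) • β
  + (dot3 E (crossProduct ε B)) • (crossProduct β E)

/-- Second-order NC correction to the magnetic induction. -/
def H2 (E B ε β : Fin 3 → ℝ) : Fin 3 → ℝ :=
  (dot3 ε ε * dot3 E B - dot3 ε B * (dot3 ε E - dot3 β B) - dot3 ε E * dot3 β E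
      - (1/2) * dot3 ε β * (dot3 E E - dot3 B B)) • E
  + ((dot3 ε E - dot3 β B) ^ 2 - dot3 β β * dot3 E E + (dot3 β E) ^ 2
      + dot3 ε β * dot3 E B) • B
  - ((dot3 ε E - dot3 β B) * dot3 E B) • ε
  + (dot3 B (crossProduct β E)) • (crossProduct ε B)
  + (dot3 ε E * dot3 E E + dot3 ε B * dot3 E B - (dot3 ε E - dot3 β B) * dot3 B B) • β


lemma stmt6_aux_d0 (E B ε β : Fin 3 → ℝ) :
    D2 (-B) E β (-ε) 0 = -(H2 E B ε β) 0 := by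
  simp only [D2, H2, dot3, cross_apply, Fin.sum_univ_three,
    Pi.add_apply, Pi.sub_apply, Pi.neg_apply, Pi.smul_apply, smul_eq_mul,
    Matrix.cons_val_zero, Matrix.cons_val_one, Matrix.head_cons,
    Matrix.cons_val_two, Matrix.tail_cons]
  ring

lemma stmt6_aux_h0 (E B ε β : Fin 3 → ℝ) :
    H2 (-B) E β (-ε) 0 = D2 E B ε β 0 := by
  simp only [D2, H2, dot3, cross_apply, Fin.sum_univ_three,
    Pi.add_apply, Pi.sub_apply, Pi.neg_apply, Pi.smul_apply, smul_eq_mul,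
    Matrix.cons_val_zero, Matrix.cons_val_one, Matrix.head_cons,
    Matrix.cons_val_two, Matrix.tail_cons]
  ring

lemma stmt6_aux_d1 (E B ε β : Fin 3 → ℝ) :
    D2 (-B) E β (-ε) 1 = -(H2 E B ε β) 1 := by
  simp only [D2, H2, dot3, cross_apply, Fin.sum_univ_three,
    Pi.add_apply, Pi.sub_apply, Pi.neg_apply, Pi.smul_apply, smul_eq_mul,
    Matrix.cons_val_zero, Matrix.cons_val_one, Matrix.head_cons,
    Matrix.cons_val_two, Matrix.tail_cons]
  ring

lemma stmt6_aux_h1 (E B ε β : Fin 3 → ℝ) :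
    H2 (-B) E β (-ε) 1 = D2 E B ε β 1 := by
  simp only [D2, H2, dot3, cross_apply, Fin.sum_univ_three,
    Pi.add_apply, Pi.sub_apply, Pi.neg_apply, Pi.smul_apply, smul_eq_mul,
    Matrix.cons_val_zero, Matrix.cons_val_one, Matrix.head_cons,
    Matrix.cons_val_two, Matrix.tail_cons]
  ring

lemma stmt6_aux_d2 (E B ε β : Fin 3 → ℝ) :
    D2 (-B) E β (-ε) 2 = -(H2 E B ε β) 2 := by
  simp only [D2, H2, dot3, cross_apply, Fin.sum_univ_three,
    Pi.add_apply, Pi.sub_apply, Pi.neg_apply, Pi.smul_apply, smul_eq_mul,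
    Matrix.cons_val_zero, Matrix.cons_val_one, Matrix.head_cons,
    Matrix.cons_val_two, Matrix.tail_cons]
  ring

lemma stmt6_aux_h2 (E B ε β : Fin 3 → ℝ) :
    H2 (-B) E β (-ε) 2 = D2 E B ε β 2 := by
  simp only [D2, H2, dot3, cross_apply, Fin.sum_univ_three,
    Pi.add_apply, Pi.sub_apply, Pi.neg_apply, Pi.smul_apply, smul_eq_mul,
    Matrix.cons_val_zero, Matrix.cons_val_one, Matrix.head_cons,
    Matrix.cons_val_two, Matrix.tail_cons]
  ring

/- STATEMENT 6: the second-order corrections respect the electric–magnetic duality: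
(E,B) → (−B,E), (ε,β) → (β,−ε) sends D⁽²⁾ → −H⁽²⁾ and H⁽²⁾ → D⁽²⁾. -/
theorem stmt_6 (E B ε β : Fin 3 → ℝ) :
    D2 (-B) E β (-ε) = -(H2 E B ε β) ∧
    H2 (-B) E β (-ε) = D2 E B ε β := by
  refine ⟨funext fun i => ?_, funext fun i => ?_⟩ <;> fin_cases i
  · exact stmt6_aux_d0 E B ε β
  · exact stmt6_aux_d1 E B ε β
  · exact stmt6_aux_d2 E B ε β
  · exact stmt6_aux_h0 E B ε β
  · exact stmt6_aux_h1 E B ε β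
  · exact stmt6_aux_h2 E B ε β
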